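/- Let φ(x,t) = t^p + a(x) t^q with 1 < p < q < ∞ and a a nonnegative function in C^{0,α}(ℝⁿ) for some α ∈ (0,1]. A compact set E ⊆ ℝⁿ is locally uniformly infimally φ-fat (for some parameters c_fat > 0 and 0 < r_o ≤ 1) if and only if it is locally uniformly p-fat (for some, possibly different, parameters). -/

import Mathlib

open MeasureTheory Metric Set

noncomputable section

/-- Euclidean space `ℝⁿ`. -/
abbrev En (n : ℕ) : Type := EuclideanSpace ℝ (Fin n)

/-- Norm of the (a.e. defined, by Rademacher's theorem) gradient of `u` at `x`. -/
def gnorm {n : ℕ} (u : En n → ℝ) (x : En n) : ℝ := ‖fderiv ℝ u x‖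

/-- Admissible test functions for the level-`t` capacity of `E` in `O`:
Lipschitz on the closure of `O`, `u ≥ t` on `E`, `u = 0` on `∂O`. -/
def Adm {n : ℕ} (E O : Set (En n)) (t : ℝ) : Set (En n → ℝ) :=
  {u | (∃ K, LipschitzOnWith K u (closure O)) ∧ (∀ x ∈ E, t ≤ u x) ∧
    ∀ x ∈ frontier O, u x = 0}

/-- Level-`t` variational capacity with integrand `ψ` and normalization `ψm`. -/
def capLevel {n : ℕ} (ψ : En n → ℝ → ℝ) (ψm : ℝ → ℝ)
    (E O : Set (En n)) (t : ℝ) : ℝ :=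
  sInf ((fun u => ∫ x in O, ψ x (gnorm u x) / ψm t) '' Adm E O t)

/-- Infimal capacity with integrand `ψ` and normalization `ψm`. -/
def capInfGen {n : ℕ} (ψ : En n → ℝ → ℝ) (ψm : ℝ → ℝ) (E O : Set (En n)) : ℝ :=
  ⨅ t : Ioi (0 : ℝ), capLevel ψ ψm E O (t : ℝ)

/-- The double-phase integrand `φ(x,t) = t^p + a(x) t^q`. -/
def phi {n : ℕ} (a : En n → ℝ) (p q : ℝ) (x : En n) (t : ℝ) : ℝ :=
  t ^ p + a x * t ^ q

/-- `a_O^- = inf_{x ∈ O} a(x)`. -/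
def aInfOn {n : ℕ} (a : En n → ℝ) (O : Set (En n)) : ℝ := sInf (a '' O)

/-- `a_O^+ = sup_{x ∈ O} a(x)`. -/
def aSupOn {n : ℕ} (a : En n → ℝ) (O : Set (En n)) : ℝ := sSup (a '' O)

/-- `φ_O^-(t) = t^p + a_O^- t^q`. -/
def phiMinus {n : ℕ} (a : En n → ℝ) (p q : ℝ) (O : Set (En n)) (t : ℝ) : ℝ :=
  t ^ p + aInfOn a O * t ^ q

/-- Level-`t` variational capacity for the double-phase integrand. -/
def capPhiLevel {n : ℕ} (a : En n → ℝ) (p q t : ℝ) (E O : Set (En n)) : ℝ :=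
  capLevel (phi a p q) (phiMinus a p q O) E O t

/-- Infimal `φ`-capacity. -/
def capPhiInf {n : ℕ} (a : En n → ℝ) (p q : ℝ) (E O : Set (En n)) : ℝ :=
  ⨅ t : Ioi (0 : ℝ), capPhiLevel a p q (t : ℝ) E O

/-- Variational `p`-capacity. -/
def capP {n : ℕ} (p : ℝ) (E O : Set (En n)) : ℝ :=
  sInf ((fun u => ∫ x in O, gnorm u x ^ p) '' Adm E O 1)

/-- The rescaled set `{x ∈ B̄(0,1/2) : z + r x ∈ E}`. -/
def shiftedSet {n : ℕ} (E : Set (En n)) (z : En n) (r : ℝ) : Set (En n) :=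
  {x ∈ closedBall (0 : En n) (1 / 2) | z + r • x ∈ E}

/-- Local uniform infimal `φ`-fatness with parameters `cfat` and `ro`. -/
def LocUnifPhiFat {n : ℕ} (a : En n → ℝ) (p q : ℝ) (E : Set (En n))
    (cfat ro : ℝ) : Prop :=
  ∀ z ∈ E, ∀ r : ℝ, 0 < r → r < ro →
    cfat ≤ capPhiInf (fun x => a (z + r • x)) p q (shiftedSet E z r) (ball (0 : En n) 1)

/-- Local uniform `p`-fatness with parameters `cfat` and `ro`. -/
def LocUnifPFat {n : ℕ} (p : ℝ) (E : Set (En n)) (cfat ro : ℝ) : Prop :=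
  ∀ z ∈ E, ∀ r : ℝ, 0 < r → r < ro →
    cfat ≤ capP p (shiftedSet E z r) (ball (0 : En n) 1)

/-- `Lip_0(Ω)`: Lipschitz functions with compact support contained in `Ω`,
extended by zero to `ℝⁿ`. -/
def Lip0 {n : ℕ} (Ω : Set (En n)) : Set (En n → ℝ) :=
  {u | (∃ K, LipschitzWith K u) ∧ HasCompactSupport u ∧ tsupport u ⊆ Ω}

/-- Restricted centered maximal operator `M_R f(x) = sup_{0<r<R} ⨍_{B(x,r)} |f|`. -/
def maxOp {n : ℕ} (R : ℝ) (f : En n → ℝ) (x : En n) : ℝ :=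
  ⨆ r : Ioo (0 : ℝ) R, ⨍ y in ball x (r : ℝ), |f y|

/-!
Both capacities are compared through the normalized `φ`-energy of `t • u` at level `t` versus the
`p`-energy of `u`. Since `φ⁻_O(t) ≥ t^p`, one has `φ(x, t s) / φ⁻_O(t) ≤ s^p + a(x) s^q t^(q-p)`,
so for a coefficient bounded on `O` letting `t → 0` gives `cap_φ^inf ≤ cap_p`. Conversely
`min(s^p, s^q) φ⁻_O(t) ≤ φ(x, t s)` and `ε^q s^p - ε^(p+q) ≤ min(s^p, s^q)` for `ε ≤ 1`, whence
`cap_φ^inf ≥ ε^q (cap_p - |O| ε^p)` at every level; choosing `ε` in terms of the `p`-fatness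
constant alone gives a lower bound uniform in the centre and the scale.
-/

open Filter Topology
open scoped NNReal ENNReal

section Gradient

variable {n : ℕ}

lemma gnorm_nonneg (u : En n → ℝ) (x : En n) : 0 ≤ gnorm u x := norm_nonneg _

lemma measurable_gnorm (u : En n → ℝ) : Measurable (gnorm u) :=
  (measurable_fderiv ℝ u).norm

lemma gnorm_const_mul (c : ℝ) (u : En n → ℝ) (x : En n) :
    gnorm (fun y => c * u y) x = |c| * gnorm u x := by
  simp only [gnorm, ← smul_eq_mul, ← Pi.smul_def, fderiv_const_smul_field, Pi.smul_apply,
    norm_smul, Real.norm_eq_abs]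

lemma gnorm_le_of_lipschitzOnWith {O : Set (En n)} (hO : IsOpen O) {K : ℝ≥0} {u : En n → ℝ}
    (hu : LipschitzOnWith K u (closure O)) {x : En n} (hx : x ∈ O) : gnorm u x ≤ K :=
  norm_fderiv_le_of_lipschitzOn ℝ (mem_of_superset (hO.mem_nhds hx) subset_closure) hu

end Gradient

section Admissible

variable {n : ℕ} {E O : Set (En n)} {t : ℝ} {u : En n → ℝ}

lemma const_mul_mem_adm {c : ℝ} (hc : 0 ≤ c) (hu : u ∈ Adm E O t) :
    (fun y => c * u y) ∈ Adm E O (c * t) := by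
  obtain ⟨⟨K, hK⟩, hE, hO⟩ := hu
  exact ⟨⟨_, (lipschitzWith_smul c).comp_lipschitzOnWith hK⟩,
    fun x hx => mul_le_mul_of_nonneg_left (hE x hx) hc,
    fun x hx => by simp [hO x hx]⟩

lemma exists_gnorm_le_of_mem_adm (hO : IsOpen O) (hu : u ∈ Adm E O t) :
    ∃ K : ℝ≥0, ∀ x ∈ O, gnorm u x ≤ K :=
  let ⟨K, hK⟩ := hu.1
  ⟨K, fun _ hx => gnorm_le_of_lipschitzOnWith hO hK hx⟩

lemma integrableOn_rpow_gnorm_of_mem_adm (hO : IsOpen O) (hOμ : volume O ≠ ∞) {p : ℝ}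
    (hp : 0 ≤ p) (hu : u ∈ Adm E O t) : IntegrableOn (fun x => gnorm u x ^ p) O := by
  obtain ⟨K, hK⟩ := exists_gnorm_le_of_mem_adm hO hu
  refine Measure.integrableOn_of_bounded (M := (K : ℝ) ^ p) hOμ
    ((measurable_gnorm u).pow_const p).aestronglyMeasurable ?_
  refine ae_restrict_of_forall_mem hO.measurableSet fun x hx => ?_
  rw [Real.norm_of_nonneg (Real.rpow_nonneg (gnorm_nonneg u x) p)]
  exact Real.rpow_le_rpow (gnorm_nonneg u x) (hK x hx) hp

end Admissible

lemma tendsto_rpow_nhdsGT_zero {r : ℝ} (hr : 0 < r) :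
    Tendsto (fun t : ℝ => t ^ r) (𝓝[>] 0) (𝓝 0) := by
  simpa [Real.zero_rpow hr.ne'] using
    (Real.continuousAt_rpow_const 0 r (Or.inr hr.le)).tendsto.mono_left nhdsWithin_le_nhds

lemma rpow_mul_rpow_sub_rpow_le_min {p q ε s : ℝ} (hp : 0 ≤ p) (hpq : p ≤ q) (hε : 0 < ε)
    (hε1 : ε ≤ 1) (hs : 0 ≤ s) : ε ^ q * s ^ p - ε ^ (p + q) ≤ min (s ^ p) (s ^ q) := by
  have hq : 0 ≤ q := hp.trans hpq
  rcases le_or_gt s ε with hsε | hεs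
  · have : ε ^ q * s ^ p ≤ ε ^ (p + q) := by
      rw [Real.rpow_add hε, mul_comm]
      gcongr
    linarith [le_min (Real.rpow_nonneg hs p) (Real.rpow_nonneg hs q)]
  have hεq : ε ^ q ≤ 1 := Real.rpow_le_one hε.le hε1 hq
  have hle : ε ^ q * s ^ p ≤ s ^ p := mul_le_of_le_one_left (Real.rpow_nonneg hs p) hεq
  refine (sub_le_self _ (Real.rpow_nonneg hε.le _)).trans (le_min hle ?_)
  rcases le_total s 1 with hs1 | hs1
  · calc ε ^ q * s ^ p ≤ s ^ q * 1 :=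
          mul_le_mul (Real.rpow_le_rpow hε.le hεs.le hq) (Real.rpow_le_one hs hs1 hp)
            (Real.rpow_nonneg hs p) (Real.rpow_nonneg hs q)
      _ = s ^ q := mul_one _
  · exact hle.trans (Real.rpow_le_rpow_of_exponent_le hs1 hpq)

lemma exists_mem_Ioc_mul_rpow_le (κ : ℝ) {p δ : ℝ} (hp : 0 < p) (hδ : 0 < δ) :
    ∃ ε ∈ Ioc (0 : ℝ) 1, κ * ε ^ p ≤ δ := by
  have h : Tendsto (fun ε : ℝ => κ * ε ^ p) (𝓝[>] 0) (𝓝 0) := by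
    simpa using (tendsto_rpow_nhdsGT_zero hp).const_mul κ
  exact (Filter.Eventually.and (Ioc_mem_nhdsGT one_pos) (h.eventually (ge_mem_nhds hδ))).exists

section DoublePhase

variable {n : ℕ} {aa : En n → ℝ} {p q : ℝ} {O : Set (En n)}

lemma aInfOn_nonneg (haa : ∀ x, 0 ≤ aa x) : 0 ≤ aInfOn aa O :=
  Real.sInf_nonneg (by rintro _ ⟨x, -, rfl⟩; exact haa x)

lemma aInfOn_le (haa : ∀ x, 0 ≤ aa x) {x : En n} (hx : x ∈ O) : aInfOn aa O ≤ aa x :=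
  csInf_le ⟨0, by rintro _ ⟨y, -, rfl⟩; exact haa y⟩ (mem_image_of_mem aa hx)

lemma phi_nonneg (haa : ∀ x, 0 ≤ aa x) (x : En n) {s : ℝ} (hs : 0 ≤ s) :
    0 ≤ phi aa p q x s :=
  add_nonneg (Real.rpow_nonneg hs p) (mul_nonneg (haa x) (Real.rpow_nonneg hs q))

lemma rpow_le_phiMinus (haa : ∀ x, 0 ≤ aa x) {t : ℝ} (ht : 0 ≤ t) :
    t ^ p ≤ phiMinus aa p q O t :=
  le_add_of_nonneg_right (mul_nonneg (aInfOn_nonneg haa) (Real.rpow_nonneg ht q))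

lemma phiMinus_pos (haa : ∀ x, 0 ≤ aa x) {t : ℝ} (ht : 0 < t) : 0 < phiMinus aa p q O t :=
  (Real.rpow_pos_of_pos ht p).trans_le (rpow_le_phiMinus haa ht.le)

lemma phi_mul_div_phiMinus_le (haa : ∀ x, 0 ≤ aa x) {t s : ℝ} (ht : 0 < t) (hs : 0 ≤ s)
    (x : En n) :
    phi aa p q x (t * s) / phiMinus aa p q O t ≤ s ^ p + aa x * s ^ q * t ^ (q - p) := by
  have htp : 0 < t ^ p := Real.rpow_pos_of_pos ht p
  calc phi aa p q x (t * s) / phiMinus aa p q O t ≤ phi aa p q x (t * s) / t ^ p :=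
        div_le_div_of_nonneg_left (phi_nonneg haa x (by positivity)) htp
          (rpow_le_phiMinus haa ht.le)
    _ = s ^ p + aa x * s ^ q * t ^ (q - p) := by
        rw [phi, Real.mul_rpow ht.le hs, Real.mul_rpow ht.le hs, Real.rpow_sub ht]
        field_simp

lemma min_rpow_le_phi_mul_div_phiMinus (haa : ∀ x, 0 ≤ aa x) {t s : ℝ} (ht : 0 < t)
    (hs : 0 ≤ s) {x : En n} (hx : x ∈ O) :
    min (s ^ p) (s ^ q) ≤ phi aa p q x (t * s) / phiMinus aa p q O t := by
  rw [le_div_iff₀ (phiMinus_pos haa ht), phi, phiMinus, Real.mul_rpow ht.le hs,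
    Real.mul_rpow ht.le hs]
  have h₁ : min (s ^ p) (s ^ q) * t ^ p ≤ s ^ p * t ^ p := by
    gcongr
    exact min_le_left _ _
  have h₂ : min (s ^ p) (s ^ q) * aInfOn aa O * t ^ q ≤ s ^ q * aa x * t ^ q := by
    have := le_min (Real.rpow_nonneg hs p) (Real.rpow_nonneg hs q)
    have := aInfOn_nonneg haa (O := O)
    gcongr
    · exact min_le_right _ _
    · exact aInfOn_le haa hx
  linear_combination h₁ + h₂

end DoublePhase

section Energy

variable {n : ℕ} {aa : En n → ℝ} {p q t : ℝ} {E O : Set (En n)} {u : En n → ℝ}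

/-- The normalized `φ`-energy whose infimum over `Adm E O t` is `capPhiLevel aa p q t E O`. -/
def phiEnergy (aa : En n → ℝ) (p q : ℝ) (O : Set (En n)) (t : ℝ) (u : En n → ℝ) : ℝ :=
  ∫ x in O, phi aa p q x (gnorm u x) / phiMinus aa p q O t

def pEnergy (p : ℝ) (O : Set (En n)) (u : En n → ℝ) : ℝ :=
  ∫ x in O, gnorm u x ^ p

lemma phiEnergy_nonneg (haa : ∀ x, 0 ≤ aa x) (ht : 0 < t) (u : En n → ℝ) :
    0 ≤ phiEnergy aa p q O t u :=
  integral_nonneg fun x => div_nonneg (phi_nonneg haa x (gnorm_nonneg u x))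
    (phiMinus_pos haa ht).le

lemma capPhiLevel_nonneg (haa : ∀ x, 0 ≤ aa x) (ht : 0 < t) :
    0 ≤ capPhiLevel aa p q t E O :=
  Real.sInf_nonneg (by rintro _ ⟨v, -, rfl⟩; exact phiEnergy_nonneg haa ht v)

lemma capPhiLevel_le_phiEnergy (haa : ∀ x, 0 ≤ aa x) (ht : 0 < t) (hu : u ∈ Adm E O t) :
    capPhiLevel aa p q t E O ≤ phiEnergy aa p q O t u :=
  csInf_le ⟨0, by rintro _ ⟨v, -, rfl⟩; exact phiEnergy_nonneg haa ht v⟩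
    (mem_image_of_mem _ hu)

lemma capPhiInf_le_capPhiLevel (haa : ∀ x, 0 ≤ aa x) (ht : 0 < t) :
    capPhiInf aa p q E O ≤ capPhiLevel aa p q t E O :=
  ciInf_le ⟨0, by rintro _ ⟨s, rfl⟩; exact capPhiLevel_nonneg haa s.2⟩
    (⟨t, ht⟩ : Ioi (0 : ℝ))

lemma capP_le_pEnergy (hu : u ∈ Adm E O 1) : capP p E O ≤ pEnergy p O u :=
  csInf_le ⟨0, by
    rintro _ ⟨v, -, rfl⟩
    exact integral_nonneg fun x => Real.rpow_nonneg (gnorm_nonneg v x) p⟩ (mem_image_of_mem _ hu)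

lemma phi_gnorm_const_mul_div_phiMinus_le (haa : ∀ x, 0 ≤ aa x) {M K : ℝ}
    (haM : ∀ x ∈ O, aa x ≤ M) (hK : ∀ x ∈ O, gnorm u x ≤ K) (hq : 0 ≤ q) (ht : 0 < t)
    {x : En n} (hx : x ∈ O) :
    phi aa p q x (gnorm (fun y => t * u y) x) / phiMinus aa p q O t ≤
      gnorm u x ^ p + M * K ^ q * t ^ (q - p) := by
  rw [gnorm_const_mul, abs_of_pos ht]
  refine (phi_mul_div_phiMinus_le haa ht (gnorm_nonneg u x) x).trans ?_
  have haxM := haM x hx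
  have hM : 0 ≤ M := (haa x).trans haxM
  have hgK := hK x hx
  have hg := gnorm_nonneg u x
  gcongr

lemma phiEnergy_const_mul_le (hO : IsOpen O) (hOμ : volume O ≠ ∞) (haa : ∀ x, 0 ≤ aa x)
    {M K : ℝ} (haM : ∀ x ∈ O, aa x ≤ M) (hp : 0 ≤ p) (hq : 0 ≤ q) (ht : 0 < t) {s : ℝ}
    (hu : u ∈ Adm E O s) (hK : ∀ x ∈ O, gnorm u x ≤ K) :
    phiEnergy aa p q O t (fun y => t * u y) ≤
      pEnergy p O u + volume.real O * (M * K ^ q * t ^ (q - p)) := by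
  have hint := integrableOn_rpow_gnorm_of_mem_adm hO hOμ hp hu
  calc phiEnergy aa p q O t (fun y => t * u y)
      ≤ ∫ x in O, (gnorm u x ^ p + M * K ^ q * t ^ (q - p)) :=
        integral_mono_of_nonneg
          (ae_of_all _ fun x => div_nonneg (phi_nonneg haa x (gnorm_nonneg _ x))
            (phiMinus_pos haa ht).le)
          (hint.add (integrableOn_const hOμ))
          (ae_restrict_of_forall_mem hO.measurableSet fun x hx =>
            phi_gnorm_const_mul_div_phiMinus_le haa haM hK hq ht hx)
    _ = pEnergy p O u + volume.real O * (M * K ^ q * t ^ (q - p)) := by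
        rw [integral_add hint (integrableOn_const hOμ), setIntegral_const, smul_eq_mul]
        rfl

lemma sub_le_phiEnergy_const_mul (hO : IsOpen O) (hOμ : volume O ≠ ∞) (haa : ∀ x, 0 ≤ aa x)
    (haam : Measurable aa) {M : ℝ} (haM : ∀ x ∈ O, aa x ≤ M) (hp : 0 ≤ p) (hpq : p ≤ q)
    (ht : 0 < t) {ε : ℝ} (hε : 0 < ε) (hε1 : ε ≤ 1) {s : ℝ} (hu : u ∈ Adm E O s) :
    ε ^ q * pEnergy p O u - volume.real O * ε ^ (p + q) ≤
      phiEnergy aa p q O t (fun y => t * u y) := by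
  obtain ⟨K, hK⟩ := exists_gnorm_le_of_mem_adm hO hu
  have hint := integrableOn_rpow_gnorm_of_mem_adm hO hOμ hp hu
  have hmeas : Measurable fun x => phi aa p q x (gnorm (fun y => t * u y) x) :=
    ((measurable_gnorm _).pow_const p).add (haam.mul ((measurable_gnorm _).pow_const q))
  have hint_phi : IntegrableOn
      (fun x => phi aa p q x (gnorm (fun y => t * u y) x) / phiMinus aa p q O t) O := by
    refine Integrable.mono' (hint.add (integrableOn_const (C := M * K ^ q * t ^ (q - p)) hOμ))
      (hmeas.div_const _).aestronglyMeasurable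
      (ae_restrict_of_forall_mem hO.measurableSet fun x hx => ?_)
    rw [Real.norm_of_nonneg (div_nonneg (phi_nonneg haa x (gnorm_nonneg _ x))
      (phiMinus_pos haa ht).le)]
    exact phi_gnorm_const_mul_div_phiMinus_le haa haM hK (hp.trans hpq) ht hx
  calc ε ^ q * pEnergy p O u - volume.real O * ε ^ (p + q)
      = ∫ x in O, (ε ^ q * gnorm u x ^ p - ε ^ (p + q)) := by
        rw [integral_sub (hint.const_mul _) (integrableOn_const hOμ), integral_const_mul,
          setIntegral_const, smul_eq_mul]
        rfl
    _ ≤ phiEnergy aa p q O t (fun y => t * u y) := by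
        refine setIntegral_mono_on ((hint.const_mul _).sub (integrableOn_const hOμ)) hint_phi
          hO.measurableSet fun x hx => ?_
        rw [gnorm_const_mul, abs_of_pos ht]
        exact (rpow_mul_rpow_sub_rpow_le_min hp hpq hε hε1 (gnorm_nonneg u x)).trans
          (min_rpow_le_phi_mul_div_phiMinus haa ht (gnorm_nonneg u x) hx)

end Energy

section Capacity

variable {n : ℕ} {p q : ℝ} {O : Set (En n)}

theorem capPhiInf_le_capP (hO : IsOpen O) (hOμ : volume O ≠ ∞) {aa : En n → ℝ}
    (haa : ∀ x, 0 ≤ aa x) (hbdd : BddAbove (aa '' O)) (hp : 0 ≤ p) (hpq : p < q)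
    (E : Set (En n)) : capPhiInf aa p q E O ≤ capP p E O := by
  rcases (Adm E O 1).eq_empty_or_nonempty with hempty | hne
  -- without admissible functions both sides are the junk value `sInf ∅ = 0`
  · calc capPhiInf aa p q E O ≤ capPhiLevel aa p q 1 E O :=
          capPhiInf_le_capPhiLevel haa one_pos
      _ = capP p E O := by simp [capPhiLevel, capLevel, capP, hempty]
  refine le_csInf (hne.image _) ?_
  rintro _ ⟨u, hu, rfl⟩
  obtain ⟨M, hM⟩ := hbdd
  obtain ⟨K, hK⟩ := exists_gnorm_le_of_mem_adm hO hu
  have hlim : Tendsto (fun t => pEnergy p O u + volume.real O * (M * K ^ q * t ^ (q - p)))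
      (𝓝[>] 0) (𝓝 (pEnergy p O u)) := by
    simpa using ((tendsto_rpow_nhdsGT_zero (sub_pos.2 hpq)).const_mul (M * K ^ q)).const_mul
      (volume.real O) |>.const_add (pEnergy p O u)
  refine ge_of_tendsto hlim (eventually_mem_nhdsWithin.mono fun t (ht : 0 < t) => ?_)
  calc capPhiInf aa p q E O ≤ capPhiLevel aa p q t E O := capPhiInf_le_capPhiLevel haa ht
    _ ≤ phiEnergy aa p q O t (fun y => t * u y) :=
        capPhiLevel_le_phiEnergy haa ht (by simpa using const_mul_mem_adm ht.le hu)
    _ ≤ _ := phiEnergy_const_mul_le hO hOμ haa (fun x hx => hM (mem_image_of_mem aa hx)) hp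
        (hp.trans hpq.le) ht hu hK

theorem exists_le_capPhiInf_of_le_capP (hO : IsOpen O) (hOμ : volume O ≠ ∞) (hp : 0 < p)
    (hpq : p ≤ q) {c : ℝ} (hc : 0 < c) :
    ∃ c' > 0, ∀ (aa : En n → ℝ) (E : Set (En n)), (∀ x, 0 ≤ aa x) → Measurable aa →
      BddAbove (aa '' O) → c ≤ capP p E O → c' ≤ capPhiInf aa p q E O := by
  obtain ⟨ε, ⟨hε, hε1⟩, hεc⟩ :=
    exists_mem_Ioc_mul_rpow_le (volume.real O) hp (half_pos hc)
  refine ⟨ε ^ q * (c / 2), by positivity, fun aa E haa haam ⟨M, hM⟩ hcap => ?_⟩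
  obtain ⟨u, hu⟩ : (Adm E O 1).Nonempty := by
    by_contra! h
    simp only [capP, h, image_empty, Real.sInf_empty] at hcap
    linarith
  refine le_ciInf fun ⟨t, (ht : 0 < t)⟩ => le_csInf ⟨_, mem_image_of_mem _
    (by simpa using const_mul_mem_adm ht.le hu)⟩ ?_
  rintro _ ⟨v, hv, rfl⟩
  set w := fun y => t⁻¹ * v y
  have hw : w ∈ Adm E O 1 := by
    simpa [inv_mul_cancel₀ ht.ne'] using const_mul_mem_adm (inv_nonneg.2 ht.le) hv
  have hvw : (fun y => t * w y) = v := funext fun y => mul_inv_cancel_left₀ ht.ne' (v y)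
  have hcw : c ≤ pEnergy p O w := hcap.trans (capP_le_pEnergy hw)
  calc ε ^ q * (c / 2) ≤ ε ^ q * pEnergy p O w - volume.real O * ε ^ (p + q) := by
        rw [Real.rpow_add hε]
        nlinarith [Real.rpow_pos_of_pos hε q]
    _ ≤ phiEnergy aa p q O t (fun y => t * w y) :=
        sub_le_phiEnergy_const_mul hO hOμ haa haam (fun x hx => hM (mem_image_of_mem aa hx))
          hp.le hpq ht hε hε1 hw
    _ = phiEnergy aa p q O t v := by rw [hvw]

end Capacity

lemma continuous_of_abs_sub_le_mul_rpow {X : Type*} [PseudoMetricSpace X] {f : X → ℝ}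
    {A α : ℝ} (hα : 0 < α) (hf : ∀ x y, |f x - f y| ≤ A * dist x y ^ α) :
    Continuous f := by
  refine continuous_iff_continuousAt.2 fun y => tendsto_iff_dist_tendsto_zero.2 ?_
  have h : Tendsto (fun x => A * dist x y ^ α) (𝓝 y) (𝓝 0) := by
    simpa [Real.zero_rpow hα.ne'] using
      ((tendsto_iff_dist_tendsto_zero.1 tendsto_id).rpow_const (Or.inr hα.le)).const_mul A
  exact squeeze_zero (fun _ => dist_nonneg) (fun x => hf x y) h

theorem phiFat_iff_pFat_general
    (n : ℕ) (p q α A : ℝ) (a : En n → ℝ)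
    (hp : 1 < p) (hpq : p < q) (hα : 0 < α)
    (ha : ∀ x, 0 ≤ a x)
    (haH : ∀ x y, |a x - a y| ≤ A * dist x y ^ α)
    (E : Set (En n)) :
    (∃ cfat ro : ℝ, 0 < cfat ∧ 0 < ro ∧ ro ≤ 1 ∧ LocUnifPhiFat a p q E cfat ro) ↔
    (∃ cfat ro : ℝ, 0 < cfat ∧ 0 < ro ∧ ro ≤ 1 ∧ LocUnifPFat p E cfat ro) := by
  have hp0 : 0 < p := one_pos.trans hp
  have hball : volume (ball (0 : En n) 1) ≠ ∞ := measure_ball_lt_top.ne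
  have hresc : ∀ (z : En n) (r : ℝ), Continuous fun x : En n => a (z + r • x) := fun z r =>
    (continuous_of_abs_sub_le_mul_rpow hα haH).comp (by fun_prop)
  have hbdd : ∀ (z : En n) (r : ℝ), BddAbove ((fun x => a (z + r • x)) '' ball 0 1) :=
    fun z r => ((isCompact_closedBall 0 1).bddAbove_image (hresc z r).continuousOn).mono
      (image_mono ball_subset_closedBall)
  constructor
  · rintro ⟨c, ro, hc, hro, hro1, hfat⟩
    exact ⟨c, ro, hc, hro, hro1, fun z hz r hr hrro => (hfat z hz r hr hrro).trans
      (capPhiInf_le_capP isOpen_ball hball (fun _ => ha _) (hbdd z r) hp0.le hpq _)⟩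
  · rintro ⟨c, ro, hc, hro, hro1, hfat⟩
    obtain ⟨c', hc', hle⟩ :=
      exists_le_capPhiInf_of_le_capP (q := q) isOpen_ball hball hp0 hpq.le hc
    exact ⟨c', ro, hc', hro, hro1, fun z hz r hr hrro => hle _ _ (fun _ => ha _)
      (hresc z r).measurable (hbdd z r) (hfat z hz r hr hrro)⟩

/-- **Equivalence of local uniform infimal `φ`-fatness and local uniform
`p`-fatness** (Theorem 2.5). -/
theorem phiFat_iff_pFat
    (n : ℕ) (hn : 0 < n) (p q α A : ℝ) (a : En n → ℝ)
    (hp : 1 < p) (hpq : p < q) (hα : 0 < α) (hα1 : α ≤ 1)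
    (ha : ∀ x, 0 ≤ a x) (hA : 0 ≤ A)
    (haH : ∀ x y, |a x - a y| ≤ A * dist x y ^ α)
    (E : Set (En n)) (hE : IsCompact E) :
    (∃ cfat ro : ℝ, 0 < cfat ∧ 0 < ro ∧ ro ≤ 1 ∧ LocUnifPhiFat a p q E cfat ro) ↔
    (∃ cfat ro : ℝ, 0 < cfat ∧ 0 < ro ∧ ro ≤ 1 ∧ LocUnifPFat p E cfat ro) :=
  phiFat_iff_pFat_general n p q α A a hp hpq hα ha haH E
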